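/- arXiv:1404.6380 — 3 statements merged into one kernel-verified Lean document; each statement's English description precedes it below -/
import Mathlib

section
/- Let Q̃(t) = (t^n, q₂(t), q₃(t)) be a polynomial parametrization where q₂(t) = m₂ t^n + Σ_{i=1}^{ℓ₂} a_{i,2} t^{r₂(n₂ − n_{i,2})} and q₃(t) = m₃ t^n + Σ_{i=1}^{ℓ₃} a_{i,3} t^{r₃(n₃ − n_{i,3})} with all a_{i,k} ≠ 0, n = lcm(n₂, n₃), rₖ = n/nₖ, 0 < n_{1,k} < ⋯ < n_{ℓₖ,k} ≤ nₖ, and gcd(nₖ, n_{1,k}, …, n_{ℓₖ,k}) = 1 for k = 2,3. If there exist a polynomial R(t) of degree r > 1 and a polynomial map Q(t) = (q̂₁(t), q̂₂(t), q̂₃(t)) with Q(R(t)) = Q̃(t), then a contradiction follows; hence Q̃ is a proper (birational) parametrization. -/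
/-!
If `p₁ ∘ R = tⁿ`, then for a root `α` of `p₁` the polynomial `R - α` divides `tⁿ`, so
`R = c t^r + α` with `r = deg R`. Every polynomial of the form `p ∘ R` is then a polynomial in
`t^r`. The exponents `r_k (n_k - n_{i,k})` of `q_k` all occur, so `r` divides them and `n`, and
`gcd(n_k, n_{1,k}, …) = 1` forces `r ∣ r_k = n / n_k`. But `n / n₂` and `n / n₃` are coprime
because `n = lcm(n₂, n₃)`, so `r = 1`.
-/

open Polynomial

theorem Nat.lcm_div_left_eq_div_gcd {a : ℕ} (b : ℕ) (ha : 0 < a) :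
    Nat.lcm a b / a = b / Nat.gcd a b := by
  rw [Nat.lcm, Nat.mul_div_assoc _ (Nat.gcd_dvd_right a b), Nat.mul_div_cancel_left _ ha]

theorem Nat.coprime_lcm_div_left_lcm_div_right {a b : ℕ} (ha : 0 < a) (hb : 0 < b) :
    Nat.Coprime (Nat.lcm a b / a) (Nat.lcm a b / b) := by
  rw [Nat.lcm_div_left_eq_div_gcd b ha, Nat.lcm_comm, Nat.lcm_div_left_eq_div_gcd a hb,
    Nat.gcd_comm b a]
  exact (Nat.coprime_div_gcd_div_gcd (Nat.gcd_pos_of_pos_left b ha)).symm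

theorem Nat.dvd_of_dvd_mul_of_forall_dvd_mul_sub {ι : Type*} {s : Finset ι} {e : ι → ℕ}
    {r k N : ℕ} (he : ∀ i ∈ s, e i ≤ N) (hg : Nat.gcd N (s.gcd e) = 1) (hN : r ∣ k * N)
    (hdvd : ∀ i ∈ s, r ∣ k * (N - e i)) : r ∣ k := by
  have hke : ∀ i ∈ s, r ∣ k * e i := fun i hi => by
    have := Nat.dvd_sub hN (hdvd i hi)
    rwa [← Nat.mul_sub, Nat.sub_sub_self (he i hi)] at this
  have hgcd : r ∣ s.gcd (fun i => k * e i) := Finset.dvd_gcd hke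
  rw [Finset.gcd_mul_left, normalize_eq] at hgcd
  simpa [Nat.gcd_mul_left, hg] using Nat.dvd_gcd hN hgcd

namespace Polynomial

theorem coeff_C_mul_X_pow_add_sum_C_mul_X_pow {R ι : Type*} [Semiring R] [Fintype ι]
    {f : ι → ℕ} (hf : Function.Injective f) {n : ℕ} (hfn : ∀ i, f i ≠ n) (m : R) (a : ι → R)
    (i : ι) : (C m * X ^ n + ∑ j, C (a j) * X ^ f j).coeff (f i) = a i := by
  classical
  simp only [coeff_add, coeff_C_mul_X_pow, finsetSum_coeff, if_neg (hfn i), hf.eq_iff,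
    Finset.sum_ite_eq, Finset.mem_univ, if_true, zero_add]

variable {K : Type*} [Field K]

theorem exists_eq_C_mul_X_pow_of_dvd_X_pow {P : K[X]} {n : ℕ} (h : P ∣ X ^ n) :
    ∃ c, P = C c * X ^ P.natDegree := by
  obtain ⟨i, -, u, hu⟩ := (dvd_prime_pow prime_X n).mp h
  obtain ⟨c, hc, hcu⟩ := isUnit_iff.mp (u⁻¹).isUnit
  have hP : P = C c * X ^ i := by
    rw [hcu, ← hu, mul_comm, mul_assoc, Units.mul_inv, mul_one]
  refine ⟨c, ?_⟩
  rw [hP, natDegree_C_mul_X_pow _ _ hc.ne_zero]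

theorem exists_eq_C_mul_X_pow_add_C_of_comp_eq_X_pow [IsAlgClosed K] {p R : K[X]} {n : ℕ}
    (hn : n ≠ 0) (h : p.comp R = X ^ n) : ∃ c α, R = C c * X ^ R.natDegree + C α := by
  have hp : p.degree ≠ 0 := by
    intro hp
    rw [eq_C_of_degree_eq_zero hp, C_comp] at h
    have hdeg : 0 = n := by simpa using congrArg natDegree h
    exact hn hdeg.symm
  obtain ⟨α, hα⟩ := IsAlgClosed.exists_root p hp
  obtain ⟨s, hs⟩ := dvd_iff_isRoot.mpr hα
  have hdvd : R - C α ∣ X ^ n := ⟨s.comp R, by rw [← h, hs, mul_comp, sub_comp, X_comp, C_comp]⟩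
  obtain ⟨c, hc⟩ := exists_eq_C_mul_X_pow_of_dvd_X_pow hdvd
  exact ⟨c, α, by rw [← natDegree_sub_C (a := α), ← hc, sub_add_cancel]⟩

theorem dvd_of_coeff_comp_C_mul_X_pow_add_C_ne_zero (p : K[X]) (c α : K) {r j : ℕ} (hr : 0 < r)
    (hj : (p.comp (C c * X ^ r + C α)).coeff j ≠ 0) : r ∣ j := by
  have hexpand : p.comp (C c * X ^ r + C α) = expand K r (p.comp (C c * X + C α)) := by
    rw [expand_eq_comp_X_pow, comp_assoc]
    simp only [add_comp, mul_comp, C_comp, X_comp]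
  rw [hexpand, coeff_expand hr] at hj
  by_contra hndvd
  exact hj (if_neg hndvd)

theorem dvd_div_of_forall_coeff_ne_zero_dvd {R ι : Type*} [Semiring R] [Fintype ι] {n N r : ℕ}
    (hn : n ≠ 0) (hN : N ∣ n) {m : R} {a : ι → R} {e : ι → ℕ} (ha : ∀ i, a i ≠ 0)
    (he : Function.Injective e) (he_pos : ∀ i, 0 < e i) (he_le : ∀ i, e i ≤ N)
    (hg : Nat.gcd N (Finset.univ.gcd e) = 1) (hrn : r ∣ n)
    (hq : ∀ j, (C m * X ^ n + ∑ i, C (a i) * X ^ (n / N * (N - e i))).coeff j ≠ 0 → r ∣ j) :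
    r ∣ n / N := by
  obtain ⟨k, rfl⟩ := hN
  have hk : 0 < k := Nat.pos_of_ne_zero (right_ne_zero_of_mul hn)
  have hN0 : 0 < N := Nat.pos_of_ne_zero (left_ne_zero_of_mul hn)
  rw [Nat.mul_div_cancel_left k hN0] at hq ⊢
  have hlt : ∀ i, k * (N - e i) < N * k := fun i => by
    rw [mul_comm N]
    exact Nat.mul_lt_mul_of_pos_left (by have := he_pos i; omega) hk
  have hinj : Function.Injective (fun i => k * (N - e i)) := fun i j hij => by
    have := Nat.eq_of_mul_eq_mul_left hk hij
    exact he (by have := he_le i; have := he_le j; omega)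
  refine Nat.dvd_of_dvd_mul_of_forall_dvd_mul_sub (fun i _ => he_le i) hg
    (by rwa [mul_comm]) (fun i _ => hq _ ?_)
  rw [coeff_C_mul_X_pow_add_sum_C_mul_X_pow hinj (fun i => (hlt i).ne) m a i]
  exact ha i

end Polynomial

/-- The polynomial parametrization
`Q̃(t) = (t^n, m₂ t^n + Σ a_{i,2} t^{r₂(n₂−n_{i,2})}, m₃ t^n + Σ a_{i,3} t^{r₃(n₃−n_{i,3})})`
with `n = lcm(n₂,n₃)`, `rₖ = n/nₖ`, strictly increasing positive exponents
`n_{i,k} ≤ nₖ` and `gcd(nₖ, n_{1,k}, …, n_{ℓₖ,k}) = 1` cannot be written as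
`Q ∘ R` with `deg R > 1`; i.e. such a decomposition yields a contradiction
(hence `Q̃` is proper). -/
theorem stmt5 (n₂ n₃ : ℕ) (hn₂ : 0 < n₂) (hn₃ : 0 < n₃)
    (l₂ l₃ : ℕ) (m₂ m₃ : ℂ) (a₂ : Fin l₂ → ℂ) (a₃ : Fin l₃ → ℂ)
    (e₂ : Fin l₂ → ℕ) (e₃ : Fin l₃ → ℕ)
    (ha₂ : ∀ i, a₂ i ≠ 0) (ha₃ : ∀ i, a₃ i ≠ 0)
    (he₂ : StrictMono e₂) (he₃ : StrictMono e₃)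
    (he₂p : ∀ i, 0 < e₂ i) (he₂le : ∀ i, e₂ i ≤ n₂)
    (he₃p : ∀ i, 0 < e₃ i) (he₃le : ∀ i, e₃ i ≤ n₃)
    (hg₂ : Nat.gcd n₂ (Finset.univ.gcd e₂) = 1)
    (hg₃ : Nat.gcd n₃ (Finset.univ.gcd e₃) = 1)
    (n : ℕ) (hn : n = Nat.lcm n₂ n₃)
    (q₂ q₃ : Polynomial ℂ)
    (hq₂ : q₂ = C m₂ * X ^ n + ∑ i, C (a₂ i) * X ^ ((n / n₂) * (n₂ - e₂ i)))
    (hq₃ : q₃ = C m₃ * X ^ n + ∑ i, C (a₃ i) * X ^ ((n / n₃) * (n₃ - e₃ i)))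
    (R p₁ p₂ p₃ : Polynomial ℂ) (hR : 1 < R.natDegree)
    (h1 : p₁.comp R = X ^ n) (h2 : p₂.comp R = q₂) (h3 : p₃.comp R = q₃) :
    False := by
  have hn0 : n ≠ 0 := hn ▸ Nat.lcm_ne_zero hn₂.ne' hn₃.ne'
  obtain ⟨c, α, hRform⟩ := exists_eq_C_mul_X_pow_add_C_of_comp_eq_X_pow hn0 h1
  have hsupp : ∀ (p : ℂ[X]) j, (p.comp R).coeff j ≠ 0 → R.natDegree ∣ j := fun p j hj =>
    dvd_of_coeff_comp_C_mul_X_pow_add_C_ne_zero p c α (by omega) (hRform ▸ hj)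
  have hrn : R.natDegree ∣ n := hsupp p₁ n (by simp [h1])
  have hd₂ : R.natDegree ∣ n / n₂ :=
    dvd_div_of_forall_coeff_ne_zero_dvd hn0 (hn ▸ Nat.dvd_lcm_left n₂ n₃) ha₂ he₂.injective he₂p he₂le
      hg₂ hrn (hq₂ ▸ h2 ▸ hsupp p₂)
  have hd₃ : R.natDegree ∣ n / n₃ :=
    dvd_div_of_forall_coeff_ne_zero_dvd hn0 (hn ▸ Nat.dvd_lcm_right n₂ n₃) ha₃ he₃.injective he₃p he₃le
      hg₃ hrn (hq₃ ▸ h3 ▸ hsupp p₃)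
  have hcop : Nat.Coprime (n / n₂) (n / n₃) := hn ▸ Nat.coprime_lcm_div_left_lcm_div_right hn₂ hn₃
  have := Nat.eq_one_of_dvd_coprimes hcop hd₂ hd₃
  omega
end

section
/- If a polynomial q(t) ∈ ℂ[t] satisfies q(R(t)) = t^n for some polynomial R(t) ∈ ℂ[t] of degree r ≥ 1, then R(t) = c·t^r + R(0) for some nonzero constant c, q(t) = c'·(t − R(0))^k for some nonzero constant c', and r·k = n where k = deg q. -/
/-!
Every root `b` of `q` is attained by `R` (algebraic closedness), say `b = R t`; then
`t ^ n = q (R t) = 0`, so `t = 0` and `b = R 0`. Hence `q = c' (X - R 0) ^ k`, so `R 0` is a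
root of `q`, and the same argument shows that `0` is the only root of `R - R 0`, which is
therefore a monomial `c X ^ r`. Comparing degrees in `q ∘ R = X ^ n` gives `r k = n`.
-/

open Polynomial

namespace Polynomial

variable {K : Type*} [Field K]

theorem eq_C_leadingCoeff_mul_X_sub_C_pow_of_forall_isRoot [IsAlgClosed K] {p : K[X]} {a : K}
    (ha : ∀ b, p.IsRoot b → b = a) :
    p = C p.leadingCoeff * (X - C a) ^ p.natDegree := by
  have hroots : p.roots = Multiset.replicate p.natDegree a :=
    Multiset.eq_replicate.mpr
      ⟨IsAlgClosed.card_roots_eq_natDegree, fun b hb ↦ ha b (isRoot_of_mem_roots hb)⟩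
  calc p = C p.leadingCoeff * (p.roots.map (X - C ·)).prod :=
        (C_leadingCoeff_mul_prod_multiset_X_sub_C IsAlgClosed.card_roots_eq_natDegree).symm
    _ = C p.leadingCoeff * (X - C a) ^ p.natDegree := by
        rw [hroots, Multiset.map_replicate, Multiset.prod_replicate]

section CompEqXPow

variable {q R : K[X]} {n : ℕ}

theorem eq_zero_of_isRoot_eval_of_comp_eq_X_pow (hn : n ≠ 0) (h : q.comp R = X ^ n) {t : K}
    (ht : q.IsRoot (R.eval t)) : t = 0 := by
  have hqRt := congrArg (eval t) h
  rw [eval_comp, ht.eq_zero, eval_pow, eval_X] at hqRt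
  exact (pow_eq_zero_iff hn).mp hqRt.symm

theorem eq_eval_zero_of_isRoot_of_comp_eq_X_pow [IsAlgClosed K] (hn : n ≠ 0)
    (hR : R.natDegree ≠ 0) (h : q.comp R = X ^ n) {b : K} (hb : q.IsRoot b) : b = R.eval 0 := by
  obtain ⟨t, rfl⟩ := IsAlgClosed.eval_surjective hR b
  rw [eq_zero_of_isRoot_eval_of_comp_eq_X_pow hn h hb]

end CompEqXPow

end Polynomial

/-- if `q(R(t)) = t^n` with `deg R = r ≥ 1`, then `R` is a shifted
monomial `c·t^r + R(0)`, `q` is a scaled power `c'·(t − R(0))^k` of a linear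
factor with `k = deg q`, and `r·k = n`. -/
theorem stmt7 (n : ℕ) (hn : 0 < n) (q R : Polynomial ℂ) (hr : 1 ≤ R.natDegree)
    (h : q.comp R = X ^ n) :
    ∃ c c' : ℂ, c ≠ 0 ∧ c' ≠ 0 ∧
      R = C c * X ^ R.natDegree + C (R.eval 0) ∧
      q = C c' * (X - C (R.eval 0)) ^ q.natDegree ∧
      R.natDegree * q.natDegree = n := by
  have hR : R.natDegree ≠ 0 := by omega
  have hq0 : q ≠ 0 := by
    rintro rfl
    exact pow_ne_zero n X_ne_zero (h.symm.trans (zero_comp (p := R)))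
  have hdeg : R.natDegree * q.natDegree = n := by
    simpa [natDegree_comp, mul_comm] using congrArg natDegree h
  have hk : q.natDegree ≠ 0 := right_ne_zero_of_mul (by omega : R.natDegree * q.natDegree ≠ 0)
  have hq := eq_C_leadingCoeff_mul_X_sub_C_pow_of_forall_isRoot
    fun b ↦ eq_eval_zero_of_isRoot_of_comp_eq_X_pow hn.ne' hR h
  have hqa : q.IsRoot (R.eval 0) := by
    rw [hq]
    simp [hk]
  have hS0 : R - C (R.eval 0) ≠ 0 :=
    ne_zero_of_natDegree_gt (n := 0) (by rwa [natDegree_sub_C, Nat.pos_iff_ne_zero])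
  have hS := eq_C_leadingCoeff_mul_X_sub_C_pow_of_forall_isRoot (p := R - C (R.eval 0))
    fun s hs ↦ by
      have hRs : R.eval s = R.eval 0 := by simpa [sub_eq_zero] using hs
      exact eq_zero_of_isRoot_eval_of_comp_eq_X_pow hn.ne' h (hRs ▸ hqa)
  rw [natDegree_sub_C, C_0, sub_zero] at hS
  exact ⟨_, _, leadingCoeff_ne_zero.mpr hS0, leadingCoeff_ne_zero.mpr hq0,
    eq_add_of_sub_eq hS, hq, hdeg⟩
end

section
/- Let r₂(z) = p₂₁(ℓ(1/z))/p(ℓ(1/z)) where ℓ is a Puiseux series with ramification index N solving p(ℓ(t)) = t·p₁₁(ℓ(t)), and suppose ℓ(t) = b₀ + b₁ t^{1/N} + ⋯ + b_k t^{k/N} + (higher order terms) with b_k ≠ 0, k > 0. Writing m = deg(p₂₁) and n = deg(p), if m > n then the maximal exponent of z occurring in the Puiseux expansion of r₂(z) at z = ∞ is (m − n)·k/N. -/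
/-!
As `z → ∞` the leaf `g(z) = ℓ(1/z)` is asymptotic to its top term `b_k z^{k/N}`, so in
particular `g(z) → ∞`. A quotient of polynomials `p₂₁/p` is asymptotic at infinity to
`(lc p₂₁ / lc p) w^{m-n}`, hence `r₂(z) ~ (lc p₂₁ / lc p) b_k^{m-n} z^{(m-n)k/N}`, and the
constant is nonzero.
-/

open Filter Topology Asymptotics Bornology Polynomial

namespace Complex

theorem tendsto_cpow_ofReal_cobounded_nhds_zero {r : ℝ} (hr : r < 0) :
    Tendsto (fun z : ℂ => z ^ (r : ℂ)) (cobounded ℂ) (𝓝 0) := by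
  rw [tendsto_zero_iff_norm_tendsto_zero]
  simp_rw [norm_cpow_real]
  simpa only [Function.comp_def, neg_neg] using
    (tendsto_rpow_neg_atTop (neg_pos.mpr hr)).comp tendsto_norm_cobounded_atTop

theorem isLittleO_cpow_ofReal_cobounded {r s : ℝ} (hrs : r < s) :
    (fun z : ℂ => z ^ (r : ℂ)) =o[cobounded ℂ] fun z => z ^ (s : ℂ) := by
  have hz : ∀ᶠ z in cobounded ℂ, z ≠ 0 := eventually_ne_cobounded 0
  refine (isLittleO_iff_tendsto' (hz.mono fun z hz h => ?_)).mpr ?_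
  · exact absurd h (by simp [cpow_eq_zero_iff, hz])
  · refine (tendsto_cpow_ofReal_cobounded_nhds_zero (sub_neg.mpr hrs)).congr' ?_
    filter_upwards [hz] with z hz
    rw [ofReal_sub, cpow_sub _ _ hz]

theorem isLittleO_one_cpow_ofReal_cobounded {s : ℝ} (hs : 0 < s) :
    (fun _ : ℂ => (1 : ℂ)) =o[cobounded ℂ] fun z => z ^ (s : ℂ) := by
  simpa using isLittleO_cpow_ofReal_cobounded hs

theorem isEquivalent_sum_cpow_add_cobounded {ι : Type*} [DecidableEq ι] {s : Finset ι}
    {b : ι → ℂ} {e : ι → ℝ} {j : ι} (hj : j ∈ s) (hbj : b j ≠ 0)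
    (he : ∀ i ∈ s, i ≠ j → e i < e j) (hej : 0 < e j) {ε : ℂ → ℂ} (hε : Tendsto ε (cobounded ℂ) (𝓝 0)) :
    (fun z => ∑ i ∈ s, b i * z ^ (e i : ℂ) + ε z) ~[cobounded ℂ]
      fun z => b j * z ^ (e j : ℂ) := by
  have hlower : (fun z => ∑ i ∈ s.erase j, b i * z ^ (e i : ℂ)) =o[cobounded ℂ]
      fun z => b j * z ^ (e j : ℂ) :=
    IsLittleO.fun_sum fun i hi =>
      ((isLittleO_cpow_ofReal_cobounded (he i (Finset.mem_of_mem_erase hi)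
        (Finset.ne_of_mem_erase hi))).const_mul_right hbj).const_mul_left _
  have herror : ε =o[cobounded ℂ] fun z => b j * z ^ (e j : ℂ) :=
    ((isLittleO_one_iff ℂ).mpr hε).trans
      ((isLittleO_one_cpow_ofReal_cobounded hej).const_mul_right hbj)
  refine ((hlower.add herror).add_isEquivalent IsEquivalent.refl).congr_left
    (Eventually.of_forall fun z => ?_)
  simp only [Pi.add_apply]
  rw [← Finset.add_sum_erase s _ hj]
  ring

end Complex

theorem Polynomial.isEquivalent_eval_div_eval_cobounded {𝕜 : Type*} [NormedField 𝕜]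
    {P Q : 𝕜[X]} (h : Q.natDegree ≤ P.natDegree) :
    (fun x => P.eval x / Q.eval x) ~[cobounded 𝕜]
      fun x => P.leadingCoeff / Q.leadingCoeff * x ^ (P.natDegree - Q.natDegree) := by
  refine (isEquivalent_cobounded_leading_monomial.div
    isEquivalent_cobounded_leading_monomial).congr_right ?_
  filter_upwards [eventually_ne_cobounded 0] with x hx
  simp only [Pi.div_apply, pow_sub₀ x hx h]
  ring

theorem Asymptotics.IsEquivalent.tendsto_div_of_const_mul {α β : Type*}
    [NormedField β] {l : Filter α} {u v : α → β} {c : β}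
    (huv : u ~[l] fun x => c * v x) (hv : ∀ᶠ x in l, v x ≠ 0) :
    Tendsto (fun x => u x / v x) l (𝓝 c) := by
  refine (huv.div (IsEquivalent.refl (u := v))).symm.tendsto_nhds
    (tendsto_const_nhds.congr' ?_)
  filter_upwards [hv] with x hx
  simp [hx]

/-- if a leaf is computed from `g(z) = ℓ(1/z) = b₀ + b₁ z^{1/N} + ⋯ +
b_k z^{k/N} + ε(z)` with `b_k ≠ 0`, `k > 0`, `ε(z) → 0`, and `r₂(z) =
p₂₁(g z)/p(g z)` with `m = deg p₂₁ > n = deg p`, then the maximal exponent of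
`z` in the expansion of `r₂` at infinity is `(m − n)·k/N`: precisely,
`r₂(z)/z^{(m−n)k/N}` tends to a nonzero constant as `|z| → ∞`. -/
theorem stmt14 (N k : ℕ) (hN : 0 < N) (hk : 0 < k)
    (b : Fin (k + 1) → ℂ) (hbk : b (Fin.last k) ≠ 0)
    (ε : ℂ → ℂ) (hε : Tendsto ε (Bornology.cobounded ℂ) (nhds 0))
    (p₂₁ p : Polynomial ℂ) (hp : p ≠ 0) (hmn : p.natDegree < p₂₁.natDegree)
    (g : ℂ → ℂ)
    (hg : ∀ z, g z = (∑ i : Fin (k + 1), b i * z ^ (((i : ℕ) / (N : ℝ) : ℝ) : ℂ)) + ε z) :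
    ∃ c : ℂ, c ≠ 0 ∧
      Tendsto
        (fun z : ℂ =>
          (p₂₁.eval (g z) / p.eval (g z)) /
            z ^ ((((p₂₁.natDegree - p.natDegree : ℕ) * k : ℝ) / (N : ℝ) : ℂ)))
        (Bornology.cobounded ℂ) (nhds c) := by
  set d := p₂₁.natDegree - p.natDegree
  set α : ℝ := k / N
  have hα : 0 < α := by positivity
  have hg_equiv : g ~[cobounded ℂ] fun z => b (Fin.last k) * z ^ (α : ℂ) := by
    have hgfun : g = fun z => ∑ i, b i * z ^ ((i / N : ℝ) : ℂ) + ε z := funext hg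
    rw [hgfun]
    refine Complex.isEquivalent_sum_cpow_add_cobounded (Finset.mem_univ _) hbk
      (fun i _ hi => ?_) (by simpa [α] using hα) hε |>.congr_right (by simp [α])
    have hik : (i : ℕ) < k := Fin.val_lt_last hi
    simp only [Fin.val_last]
    gcongr
  have hg_cobounded : Tendsto g (cobounded ℂ) (cobounded ℂ) := by
    rw [← tendsto_norm_atTop_iff_cobounded, ← isLittleO_one_left_iff ℂ]
    exact ((Complex.isLittleO_one_cpow_ofReal_cobounded hα).const_mul_right
      hbk).trans_isEquivalent hg_equiv.symm
  have hp₂₁ : p₂₁ ≠ 0 := ne_zero_of_natDegree_gt hmn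
  refine ⟨p₂₁.leadingCoeff / p.leadingCoeff * b (Fin.last k) ^ d,
    by simp [hp, hp₂₁, hbk], ?_⟩
  refine IsEquivalent.tendsto_div_of_const_mul ?_ ?_
  · refine ((isEquivalent_eval_div_eval_cobounded hmn.le).comp_tendsto hg_cobounded).trans
      ((IsEquivalent.refl.mul (hg_equiv.pow d)).congr_right (Eventually.of_forall fun z => ?_))
    simp only [Pi.mul_apply, Pi.pow_apply]
    have hexp : (((d : ℝ) * k : ℝ) : ℂ) / ((N : ℝ) : ℂ) = d * (α : ℂ) := by
      push_cast [α]
      ring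
    rw [hexp, Complex.cpow_nat_mul]
    ring
  · filter_upwards [eventually_ne_cobounded 0] with z hz
    simp [Complex.cpow_eq_zero_iff, hz]
end
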